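/- arXiv:2010.11147 — 3 statements merged into one kernel-verified Lean document; each statement's English description precedes it below -/
import Mathlib

section
/- Let G be a finite simple graph whose vertex set is partitioned into two disjoint sets A and B such that every vertex of A has degree 3 in G, exactly one vertex b₀ of B has degree 5 in G and every other vertex of B has degree 4 in G, |A| = 9, and |B| ≥ 9. Then there exists a vertex b of B that has at least two neighbors lying in B; equivalently, there exist faces b₁, b₂, b₃ ∈ B with b₁ ≠ b₃ such that b₂ is adjacent to both b₁ and b₃. -/
/-- Combinatorial core of Proposition 4: in a finite simple graph whose
vertices are partitioned into `A` (all of degree 3) and `B` (one vertex `b₀`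
of degree 5, the rest of degree 4) with `|A| = 9` and `|B| ≥ 9`, some vertex
of `B` has two distinct neighbors in `B`. -/
theorem exists_middle_face_deg3_deg4 {X : Type*} [Fintype X] [DecidableEq X]
    (G : SimpleGraph X) [DecidableRel G.Adj]
    (A B : Finset X)
    (hpart : ∀ x : X, x ∈ A ∨ x ∈ B) (hdisj : Disjoint A B)
    (hA : ∀ a ∈ A, G.degree a = 3)
    (b₀ : X) (hb₀ : b₀ ∈ B) (hdeg₀ : G.degree b₀ = 5)
    (hB : ∀ b ∈ B, b ≠ b₀ → G.degree b = 4)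
    (hAcard : A.card = 9) (hBcard : 9 ≤ B.card) :
    ∃ b₁ b₂ b₃ : X, b₁ ∈ B ∧ b₂ ∈ B ∧ b₃ ∈ B ∧ b₁ ≠ b₃ ∧
      G.Adj b₂ b₁ ∧ G.Adj b₂ b₃ := by
  by_contra hcon
  push_neg at hcon
  -- Each b ∈ B has at most one neighbor in B.
  have hBB : ∀ b ∈ B, (G.neighborFinset b ∩ B).card ≤ 1 := by
    intro b hbB
    by_contra hlt
    push_neg at hlt
    obtain ⟨x, hx, y, hy, hxy⟩ := Finset.one_lt_card.mp hlt
    rw [Finset.mem_inter, SimpleGraph.mem_neighborFinset] at hx hy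
    exact hcon x b y hx.2 hbB hy.2 hxy hx.1 hy.1
  -- Split degree of any vertex into neighbors in A and in B.
  have hsplit : ∀ v : X, (G.neighborFinset v ∩ A).card + (G.neighborFinset v ∩ B).card
      = G.degree v := by
    intro v
    rw [← SimpleGraph.card_neighborFinset_eq_degree]
    rw [← Finset.card_union_of_disjoint
      (Finset.disjoint_of_subset_left Finset.inter_subset_right
        (Finset.disjoint_of_subset_right Finset.inter_subset_right hdisj))]
    congr 1
    rw [← Finset.inter_union_distrib_left]
    refine Finset.inter_eq_left.mpr ?_
    intro x _
    rcases hpart x with h | h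
    · exact Finset.mem_union_left _ h
    · exact Finset.mem_union_right _ h
  -- Lower bound on B-to-A edges.
  have hlow : 3 * B.card + 1 ≤ ∑ b ∈ B, (G.neighborFinset b ∩ A).card := by
    have hBrw : B = insert b₀ (B.erase b₀) := (Finset.insert_erase hb₀).symm
    rw [hBrw, Finset.sum_insert (Finset.notMem_erase _ _)]
    have h1 : 4 ≤ (G.neighborFinset b₀ ∩ A).card := by
      have h := hsplit b₀
      have h' := hBB b₀ hb₀
      omega
    have h2 : (B.erase b₀).card • 3 ≤ ∑ b ∈ B.erase b₀, (G.neighborFinset b ∩ A).card := by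
      apply Finset.card_nsmul_le_sum
      intro b hb
      have hb' := Finset.mem_erase.mp hb
      have h := hsplit b
      have h' := hBB b hb'.2
      have h'' := hB b hb'.2 hb'.1
      omega
    have h3 : (B.erase b₀).card = B.card - 1 := Finset.card_erase_of_mem hb₀
    have h4 : 1 ≤ B.card := Finset.card_pos.mpr ⟨b₀, hb₀⟩
    have h5 : (insert b₀ (B.erase b₀)).card = B.card := by rw [← hBrw]
    simp only [smul_eq_mul] at h2
    omega
  -- Double counting: B-to-A edges equal A-to-B edges.
  have hcount : ∑ b ∈ B, (G.neighborFinset b ∩ A).card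
      = ∑ a ∈ A, (G.neighborFinset a ∩ B).card := by
    have hgen : ∀ (v : X) (S : Finset X),
        (G.neighborFinset v ∩ S).card = ∑ x ∈ S, if G.Adj v x then 1 else 0 := by
      intro v S
      rw [← Finset.card_filter]
      congr 1
      ext x
      simp [SimpleGraph.mem_neighborFinset, and_comm]
    simp_rw [hgen]
    rw [Finset.sum_comm]
    refine Finset.sum_congr rfl fun a _ => Finset.sum_congr rfl fun b _ => ?_
    simp [G.adj_comm]
  -- Upper bound on A-to-B edges.
  have hup : ∑ a ∈ A, (G.neighborFinset a ∩ B).card ≤ 27 := by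
    calc ∑ a ∈ A, (G.neighborFinset a ∩ B).card ≤ ∑ a ∈ A, 3 := by
          apply Finset.sum_le_sum
          intro a ha
          calc (G.neighborFinset a ∩ B).card ≤ (G.neighborFinset a).card :=
                Finset.card_le_card Finset.inter_subset_left
            _ = 3 := by rw [SimpleGraph.card_neighborFinset_eq_degree]; exact hA a ha
      _ = 27 := by rw [Finset.sum_const, smul_eq_mul, hAcard]
  omega
end

section
/- Let G be a finite simple graph whose vertex set is partitioned into two disjoint sets A and B such that every vertex of A has degree 5 in G, every vertex of B has degree 6 in G, |A| = 12, and |B| ≥ 13. Then there exists a vertex b of B that has at least two neighbors lying in B; equivalently, there exist faces b₁, b₂, b₃ ∈ B with b₁ ≠ b₃ such that b₂ is adjacent to both b₁ and b₃. -/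
/-- Combinatorial core of Proposition 7: in a finite simple graph whose
vertices are partitioned into `A` (all of degree 5) and `B` (all of degree 6)
with `|A| = 12` and `|B| ≥ 13`, some vertex of `B` has two distinct
neighbors in `B`. -/
theorem exists_middle_face_deg5_deg6 {X : Type*} [Fintype X] [DecidableEq X]
    (G : SimpleGraph X) [DecidableRel G.Adj]
    (A B : Finset X)
    (hpart : ∀ x : X, x ∈ A ∨ x ∈ B) (hdisj : Disjoint A B)
    (hA : ∀ a ∈ A, G.degree a = 5)
    (hB : ∀ b ∈ B, G.degree b = 6)
    (hAcard : A.card = 12) (hBcard : 13 ≤ B.card) :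
    ∃ b₁ b₂ b₃ : X, b₁ ∈ B ∧ b₂ ∈ B ∧ b₃ ∈ B ∧ b₁ ≠ b₃ ∧
      G.Adj b₂ b₁ ∧ G.Adj b₂ b₃ := by
  by_contra hcon
  push_neg at hcon
  have hunion : A ∪ B = Finset.univ := by
    apply Finset.eq_univ_of_forall
    intro x
    rcases hpart x with h | h
    · exact Finset.mem_union_left _ h
    · exact Finset.mem_union_right _ h
  -- split degree
  have hsplit : ∀ x : X, (A.filter (G.Adj x)).card + (B.filter (G.Adj x)).card
      = G.degree x := by
    intro x
    rw [← Finset.card_union_of_disjoint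
        (Finset.disjoint_filter_filter hdisj), ← Finset.filter_union, hunion]
    simp [SimpleGraph.degree, SimpleGraph.neighborFinset_eq_filter]
  -- each b ∈ B has at most one neighbor in B
  have hBB : ∀ b ∈ B, (B.filter (G.Adj b)).card ≤ 1 := by
    intro b hb
    rw [Finset.card_le_one]
    intro x hx y hy
    simp only [Finset.mem_filter] at hx hy
    by_contra hxy
    exact hcon x b y hx.1 hb hy.1 hxy hx.2 hy.2
  have hBA : ∀ b ∈ B, 5 ≤ (A.filter (G.Adj b)).card := by
    intro b hb
    have h1 := hsplit b
    have h2 := hBB b hb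
    rw [hB b hb] at h1
    omega
  have hAB : ∀ a ∈ A, (B.filter (G.Adj a)).card ≤ 5 := by
    intro a ha
    have := hsplit a
    rw [hA a ha] at this
    omega
  -- double counting
  have key : ∑ b ∈ B, (A.filter (G.Adj b)).card
      = ∑ a ∈ A, (B.filter (G.Adj a)).card := by
    simp only [Finset.card_filter]
    rw [Finset.sum_comm]
    apply Finset.sum_congr rfl
    intro a _
    apply Finset.sum_congr rfl
    intro b _
    simp [G.adj_comm]
  have h1 : 5 * B.card ≤ ∑ b ∈ B, (A.filter (G.Adj b)).card := by
    calc 5 * B.card = ∑ _b ∈ B, 5 := by rw [Finset.sum_const, smul_eq_mul, Nat.mul_comm]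
    _ ≤ _ := Finset.sum_le_sum hBA
  have h2 : ∑ a ∈ A, (B.filter (G.Adj a)).card ≤ 5 * A.card := by
    calc ∑ a ∈ A, (B.filter (G.Adj a)).card ≤ ∑ _a ∈ A, 5 := Finset.sum_le_sum hAB
    _ = 5 * A.card := by rw [Finset.sum_const, smul_eq_mul, Nat.mul_comm]
  rw [key] at h1
  omega
end

section
/- Let G be a finite simple graph whose vertex set is partitioned into two disjoint sets A and B such that every vertex of A has degree 5 in G, exactly one vertex b₀ of B has degree 7 in G and every other vertex of B has degree 6 in G, |A| = 13, and |B| ≥ 13. Then there exists a vertex b of B that has at least two neighbors lying in B; equivalently, there exist faces b₁, b₂, b₃ ∈ B with b₁ ≠ b₃ such that b₂ is adjacent to both b₁ and b₃. -/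
/-- Combinatorial core of Proposition 8: in a finite simple graph whose
vertices are partitioned into `A` (all of degree 5) and `B` (one vertex `b₀`
of degree 7, the rest of degree 6) with `|A| = 13` and `|B| ≥ 13`, some
vertex of `B` has two distinct neighbors in `B`. -/
theorem exists_middle_face_deg5_deg6_deg7 {X : Type*} [Fintype X] [DecidableEq X]
    (G : SimpleGraph X) [DecidableRel G.Adj]
    (A B : Finset X)
    (hpart : ∀ x : X, x ∈ A ∨ x ∈ B) (hdisj : Disjoint A B)
    (hA : ∀ a ∈ A, G.degree a = 5)
    (b₀ : X) (hb₀ : b₀ ∈ B) (hdeg₀ : G.degree b₀ = 7)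
    (hB : ∀ b ∈ B, b ≠ b₀ → G.degree b = 6)
    (hAcard : A.card = 13) (hBcard : 13 ≤ B.card) :
    ∃ b₁ b₂ b₃ : X, b₁ ∈ B ∧ b₂ ∈ B ∧ b₃ ∈ B ∧ b₁ ≠ b₃ ∧
      G.Adj b₂ b₁ ∧ G.Adj b₂ b₃ := by
  by_contra hcon
  push_neg at hcon
  -- each b in B has at most one neighbor in B
  have h1 : ∀ b ∈ B, (G.neighborFinset b ∩ B).card ≤ 1 := by
    intro b hbB
    by_contra hlt
    push_neg at hlt
    obtain ⟨x, hx, y, hy, hxy⟩ := Finset.one_lt_card.mp hlt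
    simp only [Finset.mem_inter, SimpleGraph.mem_neighborFinset] at hx hy
    exact (hcon x b y hx.2 hbB hy.2 hxy hx.1).elim hy.1
  -- degree bound
  have h2 : ∀ b ∈ B, G.degree b ≤ (G.neighborFinset b ∩ A).card + 1 := by
    intro b hbB
    have hsub : G.neighborFinset b ⊆ (G.neighborFinset b ∩ A) ∪ (G.neighborFinset b ∩ B) := by
      intro x hx
      rcases hpart x with h | h
      · exact Finset.mem_union_left _ (Finset.mem_inter.mpr ⟨hx, h⟩)
      · exact Finset.mem_union_right _ (Finset.mem_inter.mpr ⟨hx, h⟩)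
    calc G.degree b = (G.neighborFinset b).card := rfl
      _ ≤ ((G.neighborFinset b ∩ A) ∪ (G.neighborFinset b ∩ B)).card :=
          Finset.card_le_card hsub
      _ ≤ (G.neighborFinset b ∩ A).card + (G.neighborFinset b ∩ B).card :=
          Finset.card_union_le _ _
      _ ≤ (G.neighborFinset b ∩ A).card + 1 := by
          exact Nat.add_le_add_left (h1 b hbB) _
  -- sum of degrees over B
  have hsumdeg : ∑ b ∈ B, G.degree b = 6 * B.card + 1 := by
    rw [← Finset.sum_erase_add _ _ hb₀, hdeg₀]
    have : ∑ b ∈ B.erase b₀, G.degree b = ∑ b ∈ B.erase b₀, 6 := by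
      apply Finset.sum_congr rfl
      intro b hb
      exact hB b (Finset.mem_of_mem_erase hb) (Finset.ne_of_mem_erase hb)
    rw [this, Finset.sum_const, smul_eq_mul, Finset.card_erase_of_mem hb₀]
    have hpos : 1 ≤ B.card := le_trans (by norm_num) hBcard
    omega
  -- lower bound on edges from B to A
  have hlow : 5 * B.card + 1 ≤ ∑ b ∈ B, (G.neighborFinset b ∩ A).card := by
    have := Finset.sum_le_sum h2
    rw [hsumdeg] at this
    simp only [Finset.sum_add_distrib, Finset.sum_const, smul_eq_mul, mul_one] at this
    omega
  -- double counting
  have hdc : ∑ b ∈ B, (G.neighborFinset b ∩ A).card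
      = ∑ a ∈ A, (G.neighborFinset a ∩ B).card := by
    have key : ∀ (S T : Finset X), ∑ b ∈ S, (G.neighborFinset b ∩ T).card
        = ∑ b ∈ S, ∑ a ∈ T, (if G.Adj b a then 1 else 0) := by
      intro S T
      apply Finset.sum_congr rfl
      intro b _
      rw [← Finset.sum_filter]
      simp only [Finset.sum_const, smul_eq_mul, mul_one]
      congr 1
      ext x
      simp [SimpleGraph.mem_neighborFinset, and_comm]
    rw [key, key, Finset.sum_comm]
    apply Finset.sum_congr rfl
    intro a _
    apply Finset.sum_congr rfl
    intro b _
    simp [SimpleGraph.adj_comm]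
  -- upper bound
  have hup : ∑ a ∈ A, (G.neighborFinset a ∩ B).card ≤ 65 := by
    calc ∑ a ∈ A, (G.neighborFinset a ∩ B).card
        ≤ ∑ a ∈ A, G.degree a := by
          apply Finset.sum_le_sum
          intro a _
          exact Finset.card_le_card (Finset.inter_subset_left)
      _ = ∑ a ∈ A, 5 := Finset.sum_congr rfl hA
      _ = 65 := by rw [Finset.sum_const, smul_eq_mul, hAcard]
  rw [hdc] at hlow
  omega
end
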